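/- arXiv:2102.09750 — 4 statements merged into one kernel-verified Lean document; each statement's English description precedes it below -/
import Mathlib

section
/- Let x(t) solve dx/dt = f(x,t) with initial condition x(0) = x₀, where f is C¹ and the solution depends differentiably on the initial condition. Let λ(t) solve the adjoint equation dλ/dt = -(∂f/∂x)(x(t),t)ᵀ λ(t) with final condition λ(T) = (∂L/∂x(T))ᵀ for a differentiable function L : ℝⁿ → ℝ. Then for every t ∈ [0,T], λ(t) = (∂(L∘Φ_{t→T})/∂x(t))ᵀ, i.e., λ(t) equals the gradient of L(x(T)) with respect to the state x(t). -/
/-!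
For every solution `δ` of the variational equation `δ' = J δ` the pairing `λ ⬝ᵥ δ` is conserved,
since its derivative is `-(Jᵀλ) ⬝ᵥ δ + λ ⬝ᵥ J δ = 0`. Linear equations with continuous
coefficients are solvable through any initial point of a compact interval (by gluing
Picard–Lindelöf steps of a fixed length), so we may take `δ(t₀) = eᵢ`. Then
`λᵢ(t₀) = λ(T) ⬝ᵥ δ(T) = DL(x(T)) (DΦ_{t₀}(x(t₀)) eᵢ)`, which is the chain rule for `L ∘ Φ_{t₀}`.
-/

open Set
open scoped Matrix

section LinearODE

variable {E : Type*} [NormedAddCommGroup E] [NormedSpace ℝ E]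

lemma IsIntegralCurveOn.Icc_ite {γ₁ γ₂ : ℝ → E} {v : ℝ → E → E} {a m b : ℝ}
    (ham : a ≤ m) (hmb : m ≤ b) (h₁ : IsIntegralCurveOn γ₁ v (Icc a m))
    (h₂ : IsIntegralCurveOn γ₂ v (Icc m b)) (hm : γ₁ m = γ₂ m) :
    IsIntegralCurveOn (fun t => if t ≤ m then γ₁ t else γ₂ t) v (Icc a b) := by
  set γ : ℝ → E := fun t => if t ≤ m then γ₁ t else γ₂ t
  have e₁ : EqOn γ γ₁ (Icc a m) := fun t ht => if_pos ht.2
  have e₂ : EqOn γ γ₂ (Icc m b) := fun t ht => by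
    rcases ht.1.eq_or_lt with rfl | h
    · simp [γ, hm]
    · simp [γ, h.not_ge]
  have d₁ : ∀ t, HasDerivWithinAt γ (v t (γ t)) (Icc a m) t := fun t => by
    by_cases ht : t ∈ Icc a m
    · rw [e₁ ht]; exact (h₁ t ht).congr e₁ (e₁ ht)
    · exact HasFDerivWithinAt.of_notMem_closure (by rwa [closure_Icc])
  have d₂ : ∀ t, HasDerivWithinAt γ (v t (γ t)) (Icc m b) t := fun t => by
    by_cases ht : t ∈ Icc m b
    · rw [e₂ ht]; exact (h₂ t ht).congr e₂ (e₂ ht)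
    · exact HasFDerivWithinAt.of_notMem_closure (by rwa [closure_Icc])
  rw [← Icc_union_Icc_eq_Icc ham hmb]
  exact fun t _ => (d₁ t).union (d₂ t)

variable [CompleteSpace E] {K : ℝ → E →L[ℝ] E}

lemma exists_isIntegralCurveOn_clm_of_mul_le {a b s M : ℝ} (hK : ContinuousOn K (Icc a b))
    (hKM : ∀ t ∈ Icc a b, ‖K t‖ ≤ M) (hab : (b - a) * M ≤ 1 / 2) (hs : s ∈ Icc a b) (v : E) :
    ∃ γ : ℝ → E, γ s = v ∧ IsIntegralCurveOn γ (fun t => K t) (Icc a b) := by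
  have hM : 0 ≤ M := (norm_nonneg _).trans (hKM s hs)
  -- on the ball of radius `2‖v‖ + 1` the field is bounded by `M (3‖v‖ + 1)`, and
  -- `(b - a) M ≤ 1 / 2` keeps the solution inside it
  have hpl : IsPicardLindelof (fun t => K t) (⟨s, hs⟩ : Icc a b) v (2 * ‖v‖₊ + 1) 0
      (M * (3 * ‖v‖ + 1)).toNNReal M.toNNReal := by
    refine ⟨fun t ht => ?_, fun w _ => ?_, fun t ht w hw => ?_, ?_⟩
    · refine ((K t).lipschitz.weaken ?_).lipschitzOnWith
      rw [← NNReal.coe_le_coe, coe_nnnorm, Real.coe_toNNReal _ hM]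
      exact hKM t ht
    · exact ((ContinuousLinearMap.apply ℝ E w).continuous.comp_continuousOn hK)
    · have hw' : ‖w‖ ≤ 3 * ‖v‖ + 1 := by
        have := norm_le_norm_add_norm_sub' w v
        rw [mem_closedBall_iff_norm] at hw
        push_cast at hw
        linarith
      rw [Real.coe_toNNReal _ (by positivity)]
      calc ‖K t w‖ ≤ ‖K t‖ * ‖w‖ := (K t).le_opNorm w
        _ ≤ M * (3 * ‖v‖ + 1) := mul_le_mul (hKM t ht) hw' (norm_nonneg _) hM
    · have hmax : max (b - s) (s - a) ≤ b - a := max_le (by linarith [hs.1]) (by linarith [hs.2])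
      rw [Real.coe_toNNReal _ (by positivity)]
      push_cast
      nlinarith [norm_nonneg v, mul_le_mul_of_nonneg_left hmax hM]
  exact hpl.exists_eq_forall_mem_Icc_hasDerivWithinAt₀

lemma exists_isIntegralCurveOn_clm_of_le_mul {M ε : ℝ} (hK : Continuous K) (hε : ε * M ≤ 1 / 2)
    (k : ℕ) {a b s : ℝ} (hKM : ∀ t ∈ Icc a b, ‖K t‖ ≤ M) (hab : b - a ≤ (k + 1) * ε)
    (hs : s ∈ Icc a b) (v : E) :
    ∃ γ : ℝ → E, γ s = v ∧ IsIntegralCurveOn γ (fun t => K t) (Icc a b) := by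
  have hM : 0 ≤ M := (norm_nonneg _).trans (hKM s hs)
  induction k generalizing a s v with
  | zero =>
    refine exists_isIntegralCurveOn_clm_of_mul_le hK.continuousOn hKM ?_ hs v
    calc (b - a) * M ≤ ε * M := mul_le_mul_of_nonneg_right (by simpa using hab) hM
      _ ≤ 1 / 2 := hε
  | succ k ih =>
    set m := min (a + ε) b
    have ham : a ≤ m := le_min (by nlinarith [hs.1, hs.2]) (hs.1.trans hs.2)
    have hmb : m ≤ b := min_le_right _ _
    have hshort : (m - a) * M ≤ 1 / 2 := by nlinarith [min_le_left (a + ε) b]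
    have hlong : b - m ≤ (k + 1) * ε := by
      rcases min_choice (a + ε) b with h | h <;> simp only [m, h] <;> push_cast at hab <;> nlinarith
    have hKM₁ : ∀ t ∈ Icc a m, ‖K t‖ ≤ M := fun t ht => hKM t ⟨ht.1, ht.2.trans hmb⟩
    have hKM₂ : ∀ t ∈ Icc m b, ‖K t‖ ≤ M := fun t ht => hKM t ⟨ham.trans ht.1, ht.2⟩
    by_cases hsm : s ≤ m
    · obtain ⟨γ₁, hγ₁s, hγ₁⟩ :=
        exists_isIntegralCurveOn_clm_of_mul_le hK.continuousOn hKM₁ hshort ⟨hs.1, hsm⟩ v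
      obtain ⟨γ₂, hγ₂m, hγ₂⟩ := ih hKM₂ hlong ⟨le_rfl, hmb⟩ (γ₁ m)
      exact ⟨_, by simp [hsm, hγ₁s], hγ₁.Icc_ite ham hmb hγ₂ hγ₂m.symm⟩
    · obtain ⟨γ₂, hγ₂s, hγ₂⟩ := ih hKM₂ hlong ⟨(not_le.1 hsm).le, hs.2⟩ v
      obtain ⟨γ₁, hγ₁m, hγ₁⟩ :=
        exists_isIntegralCurveOn_clm_of_mul_le hK.continuousOn hKM₁ hshort ⟨ham, le_rfl⟩ (γ₂ m)
      exact ⟨_, by simp [hsm, hγ₂s], hγ₁.Icc_ite ham hmb hγ₂ hγ₁m⟩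

lemma exists_isIntegralCurveOn_clm (hK : Continuous K) {a b s : ℝ} (hs : s ∈ Icc a b) (v : E) :
    ∃ γ : ℝ → E, γ s = v ∧ IsIntegralCurveOn γ (fun t => K t) (Icc a b) := by
  obtain ⟨C, hC⟩ := isCompact_Icc.exists_bound_of_continuousOn (s := Icc a b) hK.continuousOn
  set M := max C 0
  have hM : 0 ≤ M := le_max_right _ _
  set ε := 1 / (2 * M + 2)
  have hε : ε * M ≤ 1 / 2 := by
    rw [one_div_mul_eq_div, div_le_iff₀ (by positivity)]
    linarith
  obtain ⟨k, hk⟩ := exists_nat_ge ((b - a) / ε)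
  refine exists_isIntegralCurveOn_clm_of_le_mul hK hε k (fun t ht => (hC t ht).trans
    (le_max_left _ _)) ?_ hs v
  rw [div_le_iff₀ (by positivity)] at hk
  nlinarith [show (0 : ℝ) < ε by positivity]

lemma exists_hasDerivAt_clm_of_continuousOn {a b s : ℝ} (hK : ContinuousOn K (Icc a b))
    (hs : s ∈ Icc a b) (v : E) :
    ∃ γ : ℝ → E, γ s = v ∧ ∀ t ∈ Icc a b, HasDerivAt γ (K t (γ t)) t := by
  -- extending `K` constantly past the endpoints and solving on a larger interval makes the
  -- derivative two-sided at `a` and `b`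
  have hab : a ≤ b := hs.1.trans hs.2
  set K' := IccExtend hab (domRestrict (Icc a b) K)
  have hK' : Continuous K' := (continuousOn_iff_continuous_domRestrict.1 hK).Icc_extend'
  obtain ⟨γ, hγs, hγ⟩ := exists_isIntegralCurveOn_clm hK' (a := a - 1) (b := b + 1) (s := s)
    ⟨by linarith [hs.1], by linarith [hs.2]⟩ v
  refine ⟨γ, hγs, fun t ht => ?_⟩
  have hKt : K' t = K t := IccExtend_of_mem hab _ ht
  rw [← hKt]
  exact (hγ.isIntegralCurveAt (Icc_mem_nhds (by linarith [ht.1]) (by linarith [ht.2]))).hasDerivAt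

end LinearODE

lemma ContDiff.continuous_fderiv_fst {E F G : Type*} [NormedAddCommGroup E] [NormedSpace ℝ E]
    [NormedAddCommGroup F] [NormedSpace ℝ F] [NormedAddCommGroup G] [NormedSpace ℝ G]
    {f : E → F → G} (hf : ContDiff ℝ 1 (fun p : E × F => f p.1 p.2)) :
    Continuous (fun p : E × F => fderiv ℝ (fun y => f y p.2) p.1) := by
  have hf' : ContDiff ℝ 1 (Function.uncurry fun (p : E × F) (y : E) => f y p.2) :=
    hf.comp (contDiff_snd.prodMk (contDiff_snd.comp contDiff_fst))
  exact (hf'.fderiv (n := 0) contDiff_fst (by norm_num)).continuous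

lemma dotProduct_apply_single {ι R : Type*} [Fintype ι] [DecidableEq ι] [CommSemiring R]
    (ℓ : (ι → R) →ₗ[R] R) (v : ι → R) : (fun i => ℓ (Pi.single i 1)) ⬝ᵥ v = ℓ v := by
  conv_rhs => rw [pi_eq_sum_univ' v]
  simp [dotProduct, mul_comm]

lemma hasDerivAt_dotProduct_of_adjoint {ι : Type*} [Fintype ι] {A : Matrix ι ι ℝ}
    {lam δ : ℝ → ι → ℝ} {t : ℝ} (hlam : HasDerivAt lam (-(Aᵀ *ᵥ lam t)) t)
    (hδ : HasDerivAt δ (A *ᵥ δ t) t) : HasDerivAt (fun s => lam s ⬝ᵥ δ s) 0 t := by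
  have hsum : HasDerivAt (fun s => lam s ⬝ᵥ δ s)
      (-(Aᵀ *ᵥ lam t) ⬝ᵥ δ t + lam t ⬝ᵥ (A *ᵥ δ t)) t := by
    simp only [dotProduct, ← Finset.sum_add_distrib]
    exact HasDerivAt.fun_sum fun j _ => (hasDerivAt_pi.1 hlam j).fun_mul (hasDerivAt_pi.1 hδ j)
  rwa [neg_dotProduct, Matrix.mulVec_transpose, ← Matrix.dotProduct_mulVec, neg_add_cancel] at hsum

lemma dotProduct_eq_of_adjoint {ι : Type*} [Fintype ι] {A : ℝ → Matrix ι ι ℝ}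
    {lam δ : ℝ → ι → ℝ} {a b : ℝ} (hab : a ≤ b)
    (hlam : ∀ t ∈ Icc a b, HasDerivAt lam (-((A t)ᵀ *ᵥ lam t)) t)
    (hδ : ∀ t ∈ Icc a b, HasDerivAt δ (A t *ᵥ δ t) t) : lam b ⬝ᵥ δ b = lam a ⬝ᵥ δ a := by
  have hderiv : ∀ t ∈ Icc a b, HasDerivAt (fun s => lam s ⬝ᵥ δ s) 0 t :=
    fun t ht => hasDerivAt_dotProduct_of_adjoint (hlam t ht) (hδ t ht)
  exact constant_of_has_deriv_right_zero
    (fun t ht => (hderiv t ht).continuousAt.continuousWithinAt)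
    (fun t ht => (hderiv t (Ico_subset_Icc_self ht)).hasDerivWithinAt) b ⟨hab, le_rfl⟩

theorem stmt1_general {n : ℕ} (T : ℝ)
    (f : (Fin n → ℝ) → ℝ → (Fin n → ℝ))
    (hf : ContDiff ℝ 1 (fun p : (Fin n → ℝ) × ℝ => f p.1 p.2))
    (x lam : ℝ → (Fin n → ℝ))
    (J : ℝ → Matrix (Fin n) (Fin n) ℝ)
    (hJ : ∀ t, J t = fun i j => fderiv ℝ (fun y => f y t) (x t) (Pi.single j 1) i)
    (hx : ∀ t ∈ Set.Icc (0:ℝ) T, HasDerivAt x (f (x t) t) t)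
    (L : (Fin n → ℝ) → ℝ) (hL : Differentiable ℝ L)
    (hlam : ∀ t ∈ Set.Icc (0:ℝ) T, HasDerivAt lam (-((J t)ᵀ.mulVec (lam t))) t)
    (hlamT : lam T = fun i => fderiv ℝ L (x T) (Pi.single i 1))
    -- Φ t is the flow map taking the state at time t to the state at time T:
    (Φ : ℝ → (Fin n → ℝ) → (Fin n → ℝ))
    (hΦx : ∀ t ∈ Set.Icc (0:ℝ) T, Φ t (x t) = x T)
    (hΦdiff : ∀ t ∈ Set.Icc (0:ℝ) T, DifferentiableAt ℝ (Φ t) (x t))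
    -- the derivative of the flow map is given by the variational equation:
    (hΦvar : ∀ t₀ ∈ Set.Icc (0:ℝ) T, ∀ δ : ℝ → (Fin n → ℝ),
      (∀ t ∈ Set.Icc (0:ℝ) T, HasDerivAt δ ((J t).mulVec (δ t)) t) →
      fderiv ℝ (Φ t₀) (x t₀) (δ t₀) = δ T) :
    ∀ t ∈ Set.Icc (0:ℝ) T,
      lam t = fun i => fderiv ℝ (fun y => L (Φ t y)) (x t) (Pi.single i 1) := by
  intro t₀ ht₀
  set D : ℝ → (Fin n → ℝ) →L[ℝ] (Fin n → ℝ) := fun t => fderiv ℝ (fun y => f y t) (x t)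
  have hJD : ∀ t v, J t *ᵥ v = D t v := fun t v => by
    rw [hJ t]
    exact LinearMap.toMatrix'_mulVec (D t : (Fin n → ℝ) →ₗ[ℝ] (Fin n → ℝ)) v
  have hxc : ContinuousOn x (Icc 0 T) := fun t ht => (hx t ht).continuousAt.continuousWithinAt
  have hD : ContinuousOn D (Icc 0 T) :=
    hf.continuous_fderiv_fst.comp_continuousOn (hxc.prodMk continuousOn_id)
  funext i
  obtain ⟨δ, hδ₀, hδ⟩ := exists_hasDerivAt_clm_of_continuousOn hD ht₀ (Pi.single i 1)
  simp only [← hJD] at hδ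
  calc lam t₀ i = lam t₀ ⬝ᵥ δ t₀ := by rw [hδ₀, dotProduct_single, mul_one]
    _ = lam T ⬝ᵥ δ T := by
      have hsub : Icc t₀ T ⊆ Icc 0 T := Icc_subset_Icc_left ht₀.1
      exact (dotProduct_eq_of_adjoint ht₀.2 (fun t ht => hlam t (hsub ht))
        (fun t ht => hδ t (hsub ht))).symm
    _ = fderiv ℝ L (x T) (δ T) := by
      rw [hlamT]
      exact dotProduct_apply_single (fderiv ℝ L (x T) : (Fin n → ℝ) →ₗ[ℝ] ℝ) (δ T)
    _ = fderiv ℝ L (x T) (fderiv ℝ (Φ t₀) (x t₀) (Pi.single i 1)) := by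
      rw [← hδ₀, hΦvar t₀ ht₀ δ hδ]
    _ = fderiv ℝ (fun y => L (Φ t₀ y)) (x t₀) (Pi.single i 1) := by
      rw [fderiv_fun_comp (x t₀) (hL _) (hΦdiff t₀ ht₀), hΦx t₀ ht₀]
      rfl

/-- the adjoint variable equals the gradient of L(x(T)) w.r.t. x(t). -/
theorem stmt1 {n : ℕ} (T : ℝ) (hT : 0 ≤ T)
    (f : (Fin n → ℝ) → ℝ → (Fin n → ℝ))
    (hf : ContDiff ℝ 1 (fun p : (Fin n → ℝ) × ℝ => f p.1 p.2))
    (x lam : ℝ → (Fin n → ℝ))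
    (J : ℝ → Matrix (Fin n) (Fin n) ℝ)
    (hJ : ∀ t, J t = fun i j => fderiv ℝ (fun y => f y t) (x t) (Pi.single j 1) i)
    (hx : ∀ t ∈ Set.Icc (0:ℝ) T, HasDerivAt x (f (x t) t) t)
    (L : (Fin n → ℝ) → ℝ) (hL : Differentiable ℝ L)
    (hlam : ∀ t ∈ Set.Icc (0:ℝ) T, HasDerivAt lam (-((J t)ᵀ.mulVec (lam t))) t)
    (hlamT : lam T = fun i => fderiv ℝ L (x T) (Pi.single i 1))
    -- Φ t is the flow map taking the state at time t to the state at time T: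
    (Φ : ℝ → (Fin n → ℝ) → (Fin n → ℝ))
    (hΦx : ∀ t ∈ Set.Icc (0:ℝ) T, Φ t (x t) = x T)
    (hΦdiff : ∀ t ∈ Set.Icc (0:ℝ) T, DifferentiableAt ℝ (Φ t) (x t))
    -- the derivative of the flow map is given by the variational equation:
    (hΦvar : ∀ t₀ ∈ Set.Icc (0:ℝ) T, ∀ δ : ℝ → (Fin n → ℝ),
      (∀ t ∈ Set.Icc (0:ℝ) T, HasDerivAt δ ((J t).mulVec (δ t)) t) →
      fderiv ℝ (Φ t₀) (x t₀) (δ t₀) = δ T) :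
    ∀ t ∈ Set.Icc (0:ℝ) T,
      lam t = fun i => fderiv ℝ (fun y => L (Φ t y)) (x t) (Pi.single i 1) :=
  stmt1_general T f hf x lam J hJ hx L hL hlam hlamT Φ hΦx hΦdiff hΦvar
end

section
/- Let I₀ = {i : bᵢ = 0} and define b̃ᵢ = bᵢ for i ∉ I₀ and b̃ᵢ = h for i ∈ I₀. Consider one step of the generalized integrator: δ_{n+1} = δ_n + h Σᵢ bᵢ d_{n,i}, Δ_{n,i} = δ_n + h Σⱼ a_{i,j} d_{n,j}, λ_{n+1} = λ_n + h Σᵢ b̃ᵢ l_{n,i}, with Λ_{n,i} = λ_n + h Σⱼ b̃ⱼ(1 − a_{j,i}/bᵢ) l_{n,j} if i ∉ I₀ and Λ_{n,i} = −Σⱼ b̃ⱼ a_{j,i} l_{n,j} if i ∈ I₀. If S is bilinear and S(d_{n,i}, Λ_{n,i}) + S(Δ_{n,i}, l_{n,i}) = 0 for every stage i, then S(δ_{n+1}, λ_{n+1}) = S(δ_n, λ_n). -/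
/-!
Weighting stage `i` by `h * b̃ᵢ` puts both kinds of stages in the same form
`h b̃ᵢ Λᵢ = h bᵢ λₙ + h² ∑ⱼ (bᵢ - a_{ji}) b̃ⱼ lⱼ` (for `bᵢ = 0` this is what the choice
`b̃ᵢ = h` achieves). Expanding by bilinearity, `S(δₙ₊₁, λₙ₊₁) - S(δₙ, λₙ)` is then the
weighted sum of the stage expressions `S(dᵢ, Λᵢ) + S(Δᵢ, lᵢ)`: the terms in `a` cancel after
exchanging `i` and `j`.
-/

open Finset

theorem smul_adjoint_stage_eq {W : Type*} [AddCommGroup W] [Module ℝ W] {s : ℕ} (h : ℝ)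
    (a : Fin s → Fin s → ℝ) (b bt : Fin s → ℝ) (lam : W) (l : Fin s → W) (Λ : W) (i : Fin s)
    (hbt : bt i = if b i = 0 then h else b i)
    (hΛ : (b i ≠ 0 → Λ = lam + h • ∑ j, (bt j * (1 - a j i / b i)) • l j) ∧
      (b i = 0 → Λ = -∑ j, (bt j * a j i) • l j)) :
    (h * bt i) • Λ = (h * b i) • lam + h ^ 2 • ∑ j, ((b i - a j i) * bt j) • l j := by
  by_cases hb : b i = 0
  · rw [hΛ.2 hb, hbt, if_pos hb, hb]
    simp only [smul_sum, smul_smul, mul_zero, zero_smul, zero_add, ← sum_neg_distrib, ← neg_smul]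
    exact sum_congr rfl fun j _ => by congr 1; ring
  · rw [hΛ.1 hb, hbt, if_neg hb, smul_add, smul_sum, smul_sum, smul_sum]
    simp only [smul_smul]
    congr 1
    exact sum_congr rfl fun j _ => by field_simp

theorem bilin_step_eq_add_weighted_stage_sum {V W : Type*} [AddCommGroup V] [Module ℝ V]
    [AddCommGroup W] [Module ℝ W] {s : ℕ} (S : V →ₗ[ℝ] W →ₗ[ℝ] ℝ) (h : ℝ)
    (a : Fin s → Fin s → ℝ) (b bt : Fin s → ℝ) (δ : V) (d : Fin s → V) (lam : W)
    (l Λ : Fin s → W)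
    (hΛ : ∀ i, (h * bt i) • Λ i = (h * b i) • lam + h ^ 2 • ∑ j, ((b i - a j i) * bt j) • l j) :
    S (δ + h • ∑ i, b i • d i) (lam + h • ∑ i, bt i • l i) =
      S δ lam + ∑ i, h * bt i * (S (d i) (Λ i) + S (δ + h • ∑ j, a i j • d j) (l i)) := by
  have stage : ∀ i, h * bt i * (S (d i) (Λ i) + S (δ + h • ∑ j, a i j • d j) (l i)) =
      h * (b i * S (d i) lam) + h * (bt i * S δ (l i)) + h ^ 2 * (∑ j, b i * bt j * S (d i) (l j)
        - ∑ j, a j i * bt j * S (d i) (l j) + bt i * ∑ j, a i j * S (d j) (l i)) := by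
    intro i
    have hSΛ := congrArg (S (d i)) (hΛ i)
    simp only [map_add, map_smul, map_sum, smul_eq_mul, LinearMap.add_apply, LinearMap.smul_apply,
      LinearMap.sum_apply] at hSΛ ⊢
    rw [mul_add, hSΛ]
    simp only [sub_mul, sum_sub_distrib]
    ring
  have cross : ∑ i, bt i * ∑ j, a i j * S (d j) (l i) =
      ∑ i, ∑ j, a j i * bt j * S (d i) (l j) := by
    simp only [mul_sum]
    rw [sum_comm]
    exact sum_congr rfl fun i _ => sum_congr rfl fun j _ => by ring
  have hD : ∑ i, b i * S (d i) lam = S (∑ i, b i • d i) lam := by simp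
  have hL : ∑ i, bt i * S δ (l i) = S δ (∑ i, bt i • l i) := by simp
  have hDL : ∑ i, ∑ j, b i * bt j * S (d i) (l j) = S (∑ i, b i • d i) (∑ i, bt i • l i) := by
    simp only [map_sum, map_smul, LinearMap.sum_apply, LinearMap.smul_apply, smul_eq_mul, mul_sum,
      mul_assoc]
    rw [sum_comm]
    simp only [mul_left_comm (bt _)]
  simp only [stage, sum_add_distrib, ← mul_sum, sum_sub_distrib, cross, hD, hL, hDL]
  simp only [map_add, map_smul, smul_eq_mul, LinearMap.add_apply, LinearMap.smul_apply]
  ring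

/-- one step of the generalized (symplectic) adjoint integrator,
handling stages with bᵢ = 0, conserves a bilinear quantity S. -/
theorem stmt5 {V W : Type*} [AddCommGroup V] [Module ℝ V]
    [AddCommGroup W] [Module ℝ W]
    (S : V →ₗ[ℝ] W →ₗ[ℝ] ℝ) {s : ℕ} (h : ℝ)
    (a : Fin s → Fin s → ℝ) (b : Fin s → ℝ)
    (bt : Fin s → ℝ) (hbt : ∀ i, bt i = if b i = 0 then h else b i)
    (δn δn1 : V) (d Δ : Fin s → V)
    (lamn lamn1 : W) (l Λ : Fin s → W)
    (hΔ : ∀ i, Δ i = δn + h • ∑ j, a i j • d j)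
    (hδ1 : δn1 = δn + h • ∑ i, b i • d i)
    (hΛ : ∀ i, (b i ≠ 0 → Λ i = lamn + h • ∑ j, (bt j * (1 - a j i / b i)) • l j) ∧
               (b i = 0 → Λ i = -∑ j, (bt j * a j i) • l j))
    (hlam1 : lamn1 = lamn + h • ∑ i, bt i • l i)
    (hstage : ∀ i, S (d i) (Λ i) + S (Δ i) (l i) = 0) :
    S δn1 lamn1 = S δn lamn := by
  have hweighted i := smul_adjoint_stage_eq h a b bt lamn l (Λ i) i (hbt i) (hΛ i)
  rw [hδ1, hlam1, bilin_step_eq_add_weighted_stage_sum S h a b bt δn d lamn l Λ hweighted]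
  simp only [← hΔ, hstage, mul_zero, sum_const_zero, add_zero]
end

section
/- Suppose an N-step discretization satisfies the stepwise conservation S(δ_{n+1}, λ_{n+1}) = S(δ_n, λ_n) with δ_n = ∂x_n/∂x₀ (a Jacobian matrix), S(δ, λ) = λᵀδ, δ₀ = I, and the final condition λ_N = (∂L(x_N)/∂x_N)ᵀ for a differentiable L : ℝⁿ → ℝ. Then for every n ∈ {0,…,N}, λ_nᵀ δ_n = ∂L(x_N)/∂x₀; in particular λ₀ = (∂L(x_N)/∂x₀)ᵀ, i.e., the discrete adjoint variable equals the exact gradient of the loss with respect to the initial condition. -/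
/-!
Along the trajectory the row vector `λ_nᵀ δ_n` is conserved, so it equals its value at the final
step. There `λ_N` is the gradient of `L` at `x_N` and `δ_N` the Jacobian of `x_N`, so by the chain
rule `λ_Nᵀ δ_N` is the gradient of `L ∘ x_N` at `x₀`. At the first step `δ₀ = I` leaves `λ₀`.
-/

open scoped Matrix

theorem Nat.apply_eq_apply_of_succ_eq {α : Type*} {f : ℕ → α} {N : ℕ}
    (h : ∀ n < N, f (n + 1) = f n) {n : ℕ} (hn : n ≤ N) : f n = f N :=
  Nat.decreasingInduction (motive := fun k _ => f k = f N)
    (fun k hk ih => (h k hk).symm.trans ih) rfl hn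

theorem Matrix.vecMul_apply_single_one {R m n F : Type*} [CommSemiring R] [Fintype m]
    [Fintype n] [DecidableEq m] [DecidableEq n] [FunLike F (m → R) R] [LinearMapClass F R (m → R) R]
    (ℓ : F) (A : Matrix m n R) (i : n) :
    ((fun j => ℓ (Pi.single j 1)) ᵥ* A) i = ℓ (A *ᵥ Pi.single i 1) := by
  rw [mulVec_single_one, pi_eq_sum_univ' (A.col i)]
  simp [vecMul, dotProduct, mul_comm]

/-- stepwise conservation of λᵀδ with δ₀ = I and final condition
λ_N = ∇L(x_N) implies that λ_nᵀδ_n equals the exact gradient of L(x_N) w.r.t. x₀,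
and in particular λ₀ is that gradient. -/
theorem stmt6 {d : ℕ} (N : ℕ)
    (x : ℕ → (Fin d → ℝ) → (Fin d → ℝ)) (x₀ : Fin d → ℝ)
    (δ : ℕ → Matrix (Fin d) (Fin d) ℝ) (lam : ℕ → Fin d → ℝ)
    (L : (Fin d → ℝ) → ℝ)
    (hxdiff : ∀ n, DifferentiableAt ℝ (x n) x₀)
    (hLdiff : DifferentiableAt ℝ L (x N x₀))
    (hδ : ∀ n, ∀ v, (δ n).mulVec v = fderiv ℝ (x n) x₀ v)
    (hδ0 : δ 0 = 1)
    (hlamN : lam N = fun i => fderiv ℝ L (x N x₀) (Pi.single i 1))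
    (hcons : ∀ n < N, Matrix.vecMul (lam (n + 1)) (δ (n + 1)) =
      Matrix.vecMul (lam n) (δ n)) :
    (∀ n ≤ N, Matrix.vecMul (lam n) (δ n) =
      fun i => fderiv ℝ (fun y => L (x N y)) x₀ (Pi.single i 1)) ∧
    lam 0 = fun i => fderiv ℝ (fun y => L (x N y)) x₀ (Pi.single i 1) := by
  have hfinal : lam N ᵥ* δ N = fun i => fderiv ℝ (fun y => L (x N y)) x₀ (Pi.single i 1) := by
    funext i
    rw [hlamN, Matrix.vecMul_apply_single_one, hδ, fderiv_fun_comp x₀ hLdiff (hxdiff N),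
      ContinuousLinearMap.comp_apply]
  have hconserved : ∀ n ≤ N, lam n ᵥ* δ n = lam N ᵥ* δ N := fun _ hn =>
    Nat.apply_eq_apply_of_succ_eq (f := fun k => lam k ᵥ* δ k) hcons hn
  refine ⟨fun n hn => (hconserved n hn).trans hfinal, ?_⟩
  simpa [hδ0] using (hconserved 0 N.zero_le).trans hfinal
end

section
/- Under the hypotheses of the symplectic partitioned Runge–Kutta theorem (Bᵢ = bᵢ ≠ 0, bᵢA_{i,j} + Bⱼa_{j,i} − bᵢBⱼ = 0, Cᵢ = cᵢ), if the forward method in Eq. (4) and the adjoint method in Eq. (5) are applied to the variational system dδ/dt = J(t)δ and the adjoint system dλ/dt = −J(t)ᵀλ with exact stage Jacobians J evaluated at the forward stage points, then λ_nᵀ δ_n is independent of n: λ_Nᵀδ_N = λ_nᵀδ_n for all n = 0,…,N. -/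
/-!
Expanding `λ_{n+1} ⬝ᵥ δ_{n+1}` bilinearly and eliminating `λ_n`, `δ_n` through the stage equations
leaves `h ∑ bᵢ (Λᵢ ⬝ᵥ dᵢ + lᵢ ⬝ᵥ Δᵢ)`, which vanishes stage by stage since `dᵢ = Jᵢ Δᵢ` and
`lᵢ = -Jᵢᵀ Λᵢ`, plus `h² ∑ (bᵢ bⱼ - bⱼ Aⱼᵢ - bᵢ aᵢⱼ) lᵢ ⬝ᵥ dⱼ`, which vanishes by the symplecticity
condition. So every step conserves `λ ⬝ᵥ δ`.
-/

open Matrix Finset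

section PartitionedRungeKutta

variable {R m ι : Type*} [CommRing R] [Fintype m] [Fintype ι]

theorem neg_transpose_mulVec_dotProduct_add_dotProduct_mulVec (M : Matrix m m R) (x y : m → R) :
    -(Mᵀ *ᵥ y) ⬝ᵥ x + y ⬝ᵥ M *ᵥ x = 0 := by
  rw [neg_dotProduct, dotProduct_comm (Mᵀ *ᵥ y), dotProduct_transpose_mulVec, neg_add_cancel]

theorem add_smul_sum_dotProduct_add_smul_sum (u v : m → R) (h : R) (b : ι → R)
    (L D : ι → m → R) :
    (u + h • ∑ i, b i • L i) ⬝ᵥ (v + h • ∑ i, b i • D i) =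
      u ⬝ᵥ v + h * ∑ i, b i * (u ⬝ᵥ D i + L i ⬝ᵥ v) +
        h ^ 2 * ∑ i, ∑ j, b i * b j * (L i ⬝ᵥ D j) := by
  simp only [add_dotProduct, dotProduct_add, smul_dotProduct, dotProduct_smul, sum_dotProduct,
    dotProduct_sum, smul_eq_mul, mul_add, sum_add_distrib, mul_sum]
  have hquad : ∑ j, ∑ i, h * (b j * (h * (b i * L i ⬝ᵥ D j))) =
      ∑ i, ∑ j, h ^ 2 * (b i * b j * L i ⬝ᵥ D j) := by
    rw [sum_comm]
    exact sum_congr rfl fun i _ => sum_congr rfl fun j _ => by ring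
  linear_combination hquad

theorem partitionedRK_stage_dotProduct (a A : ι → ι → R) (h : R) (δ lam : m → R)
    (Δ Λ D L : ι → m → R) (hpair : ∀ i, L i ⬝ᵥ Δ i + Λ i ⬝ᵥ D i = 0)
    (hΔ : ∀ i, Δ i = δ + h • ∑ j, a i j • D j) (hΛ : ∀ i, Λ i = lam + h • ∑ j, A i j • L j)
    (i : ι) :
    lam ⬝ᵥ D i + L i ⬝ᵥ δ = -h * ∑ j, (A i j * (L j ⬝ᵥ D i) + a i j * (L i ⬝ᵥ D j)) := by
  rw [eq_sub_of_add_eq (hΛ i).symm, eq_sub_of_add_eq (hΔ i).symm]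
  simp only [sub_dotProduct, dotProduct_sub, smul_dotProduct, dotProduct_smul, sum_dotProduct,
    dotProduct_sum, smul_eq_mul, mul_add, sum_add_distrib, mul_sum, neg_mul, sum_neg_distrib]
  linear_combination hpair i

theorem sum_mul_sum_eq_of_symplectic (a A : ι → ι → R) (b : ι → R)
    (hsymp : ∀ i j, b i * A i j + b j * a j i - b i * b j = 0) (P : ι → ι → R) :
    ∑ i, b i * ∑ j, (A i j * P j i + a i j * P i j) = ∑ i, ∑ j, b i * b j * P i j := by
  simp only [mul_sum, mul_add, sum_add_distrib]
  rw [sum_comm (f := fun i j => b i * (A i j * P j i)), ← sum_add_distrib]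
  refine sum_congr rfl fun i _ => ?_
  rw [← sum_add_distrib]
  refine sum_congr rfl fun j _ => ?_
  linear_combination P i j * hsymp j i

theorem partitionedRK_step_dotProduct_eq (a A : ι → ι → R) (b : ι → R)
    (hsymp : ∀ i j, b i * A i j + b j * a j i - b i * b j = 0) (h : R) (δ lam : m → R)
    (Δ Λ D L : ι → m → R) (hpair : ∀ i, L i ⬝ᵥ Δ i + Λ i ⬝ᵥ D i = 0)
    (hΔ : ∀ i, Δ i = δ + h • ∑ j, a i j • D j) (hΛ : ∀ i, Λ i = lam + h • ∑ j, A i j • L j) :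
    (lam + h • ∑ i, b i • L i) ⬝ᵥ (δ + h • ∑ i, b i • D i) = lam ⬝ᵥ δ := by
  rw [add_smul_sum_dotProduct_add_smul_sum]
  simp only [partitionedRK_stage_dotProduct a A h δ lam Δ Λ D L hpair hΔ hΛ,
    mul_left_comm (b _) (-h), ← mul_sum, sum_mul_sum_eq_of_symplectic a A b hsymp]
  ring

end PartitionedRungeKutta

theorem stmt11_general {d s : ℕ} (N : ℕ) (h : ℕ → ℝ)
    (a A : Fin s → Fin s → ℝ) (b B : Fin s → ℝ)
    (hBb : ∀ i, B i = b i)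
    (hsymp : ∀ i j, b i * A i j + B j * a j i - b i * B j = 0)
    (J : ℕ → Fin s → Matrix (Fin d) (Fin d) ℝ)  -- shared stage Jacobians
    (δ lam : ℕ → Fin d → ℝ)
    (Δ Λ : ℕ → Fin s → Fin d → ℝ)
    (hΔ : ∀ n < N, ∀ i, Δ n i = δ n + h n • ∑ j, a i j • (J n j).mulVec (Δ n j))
    (hδ : ∀ n < N, δ (n + 1) = δ n + h n • ∑ i, b i • (J n i).mulVec (Δ n i))
    (hΛ : ∀ n < N, ∀ i, Λ n i = lam n + h n • ∑ j, A i j • (-(J n j)ᵀ.mulVec (Λ n j)))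
    (hlam : ∀ n < N, lam (n + 1) = lam n + h n • ∑ i, B i • (-(J n i)ᵀ.mulVec (Λ n i))) :
    ∀ n ≤ N, lam N ⬝ᵥ δ N = lam n ⬝ᵥ δ n := by
  obtain rfl : b = B := (funext hBb).symm
  have step : ∀ n < N, lam (n + 1) ⬝ᵥ δ (n + 1) = lam n ⬝ᵥ δ n := fun n hn => by
    rw [hlam n hn, hδ n hn]
    exact partitionedRK_step_dotProduct_eq a A b hsymp (h n) (δ n) (lam n) (Δ n) (Λ n) _ _
      (fun i => neg_transpose_mulVec_dotProduct_add_dotProduct_mulVec (J n i) _ _)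
      (hΔ n hn) (hΛ n hn)
  intro n hn
  exact Nat.decreasingInduction (fun k hk ih => by rw [ih, step k hk]) rfl hn

/-- iterating the single-step conservation theorem: under the
symplecticity conditions, the symplectic partitioned Runge–Kutta discretization of the
variational/adjoint pair with shared stage Jacobians conserves λ_nᵀδ_n over all steps. -/
theorem stmt11 {d s : ℕ} (N : ℕ) (h : ℕ → ℝ)
    (a A : Fin s → Fin s → ℝ) (b B : Fin s → ℝ)
    (hb : ∀ i, b i ≠ 0) (hBb : ∀ i, B i = b i)
    (hsymp : ∀ i j, b i * A i j + B j * a j i - b i * B j = 0)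
    (J : ℕ → Fin s → Matrix (Fin d) (Fin d) ℝ)  -- shared stage Jacobians
    (δ lam : ℕ → Fin d → ℝ)
    (Δ Λ : ℕ → Fin s → Fin d → ℝ)
    (hΔ : ∀ n < N, ∀ i, Δ n i = δ n + h n • ∑ j, a i j • (J n j).mulVec (Δ n j))
    (hδ : ∀ n < N, δ (n + 1) = δ n + h n • ∑ i, b i • (J n i).mulVec (Δ n i))
    (hΛ : ∀ n < N, ∀ i, Λ n i = lam n + h n • ∑ j, A i j • (-(J n j)ᵀ.mulVec (Λ n j)))
    (hlam : ∀ n < N, lam (n + 1) = lam n + h n • ∑ i, B i • (-(J n i)ᵀ.mulVec (Λ n i))) :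
    ∀ n ≤ N, lam N ⬝ᵥ δ N = lam n ⬝ᵥ δ n :=
  stmt11_general N h a A b B hBb hsymp J δ lam Δ Λ hΔ hδ hΛ hlam
end
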